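/- arXiv:2501.09312 — 3 statements merged into one kernel-verified Lean document; each statement's English description precedes it below -/
import Mathlib

section
/- (Key identity in the proof of Theorem 2) For every g : G, ⟪X, vec (f g)⟫ = ⟪F, (f' g).mulVec ψ⟫, where ⟪·,·⟫ denotes the inner product of the corresponding EuclideanSpace (conjugate-linear in the first argument). -/
/-!
Both sides split into a sum over the irreducible labels `λ`. On the left, block-diagonality of
`f g` kills the off-diagonal blocks of `X`, and on the diagonal block
`X_λλ ⊗ Y_λλ` the Kronecker factors separate:
`tr ((X_λλ ⊗ Y_λλ)ᴴ (f_λ g ⊗ 1)) = tr (X_λλᴴ f_λ g) · tr Y_λλᴴ`.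
On the right, the `λ`-blocks of `F` and `ψ` are vectorizations of `√d_λ • 1` and of a multiple of
`conj X_λλ`, so `(A ⊗ 1) vec B = vec (B Aᵀ)` turns the `λ`-term into the same product, the
normalizations `√d_λ` and `d_λ^(-1/2)` cancelling.
-/

open MeasureTheory
open scoped Kronecker Matrix ComplexOrder

noncomputable section

namespace GroupEstimation

variable {G : Type} [Group G] [TopologicalSpace G] [IsTopologicalGroup G]
  [CompactSpace G] [T2Space G] [MeasurableSpace G] [BorelSpace G]
variable {Λ : Type} [Fintype Λ] [Nonempty Λ] [DecidableEq Λ]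

/-- Vectorization of a square matrix. -/
def vecSq {ι : Type} (A : Matrix ι ι ℂ) : EuclideanSpace ℂ (ι × ι) :=
  WithLp.toLp 2 fun p => A p.1 p.2

/-- The block-diagonal representation `f` on `⊕_λ U_λ ⊗ ℂ^{n_λ}`. -/
def bigF (d n : Λ → ℕ) (f_ : ∀ l : Λ, G → Matrix (Fin (d l)) (Fin (d l)) ℂ) (g : G) :
    Matrix (Σ l : Λ, Fin (d l) × Fin (n l)) (Σ l : Λ, Fin (d l) × Fin (n l)) ℂ :=
  Matrix.blockDiagonal' fun l => f_ l g ⊗ₖ (1 : Matrix (Fin (n l)) (Fin (n l)) ℂ)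

/-- The block-diagonal representation `f'` on `⊕_λ U_λ ⊗ ℂ^{d_λ}`. -/
def bigF' (d : Λ → ℕ) (f_ : ∀ l : Λ, G → Matrix (Fin (d l)) (Fin (d l)) ℂ) (g : G) :
    Matrix (Σ l : Λ, Fin (d l) × Fin (d l)) (Σ l : Λ, Fin (d l) × Fin (d l)) ℂ :=
  Matrix.blockDiagonal' fun l => f_ l g ⊗ₖ (1 : Matrix (Fin (d l)) (Fin (d l)) ℂ)

/-- The vector `F = ⊕_λ √(d λ) |I_λ⟩⟩`. -/
def Fvec (d : Λ → ℕ) : EuclideanSpace ℂ (Σ l : Λ, Fin (d l) × Fin (d l)) :=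
  WithLp.toLp 2 fun p => if p.2.1 = p.2.2 then (Real.sqrt (d p.1) : ℂ) else 0

/-- The seed vector `X = ⊕_{λ,λ'} |X_{λ,λ'}⟩⟩ ⊗ |Y_{λ,λ'}⟩`. -/
def Xvec (d n : Λ → ℕ)
    (Xm : ∀ l l' : Λ, Matrix (Fin (d l)) (Fin (d l')) ℂ)
    (Y : ∀ l l' : Λ, Fin (n l) × Fin (n l') → ℂ) :
    EuclideanSpace ℂ ((Σ l : Λ, Fin (d l) × Fin (n l)) × (Σ l : Λ, Fin (d l) × Fin (n l))) :=
  WithLp.toLp 2 fun pq => Xm pq.1.1 pq.2.1 pq.1.2.1 pq.2.2.1 * Y pq.1.1 pq.2.1 (pq.1.2.2, pq.2.2.2)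

/-- The input state `ψ[T]` of the simulating parallel strategy. -/
def psiVec (d n : Λ → ℕ)
    (Xm : ∀ l l' : Λ, Matrix (Fin (d l)) (Fin (d l')) ℂ)
    (Y : ∀ l l' : Λ, Fin (n l) × Fin (n l') → ℂ) :
    EuclideanSpace ℂ (Σ l : Λ, Fin (d l) × Fin (d l)) :=
  WithLp.toLp 2 fun p => ((((d p.1 : ℝ)) ^ (-(1:ℝ)/2) : ℝ) : ℂ) *
    (∑ a, star (Y p.1 p.1 (a, a))) * star (Xm p.1 p.1 p.2.2 p.2.1)

/-- The average state on the doubled system (entrywise Bochner integral). -/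
def rhoMuB (μ : Measure G) (d n : Λ → ℕ)
    (f_ : ∀ l : Λ, G → Matrix (Fin (d l)) (Fin (d l)) ℂ) :
    Matrix ((Σ l : Λ, Fin (d l) × Fin (n l)) × (Σ l : Λ, Fin (d l) × Fin (n l)))
      ((Σ l : Λ, Fin (d l) × Fin (n l)) × (Σ l : Λ, Fin (d l) × Fin (n l))) ℂ :=
  fun p q => ∫ g, bigF d n f_ g p.1 p.2 * star (bigF d n f_ g q.1 q.2) ∂μ

end GroupEstimation

namespace Matrix

open scoped Kronecker

variable {o : Type*} [Fintype o] {m' n' p' : o → Type*} {α : Type*}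

theorem trace_eq_sum_trace_blockDiag' [∀ i, Fintype (m' i)] [AddCommMonoid α]
    (M : Matrix (Σ i, m' i) (Σ i, m' i) α) : trace M = ∑ i, trace (blockDiag' M i) := by
  simp only [trace, diag, Fintype.sum_sigma]
  rfl

theorem blockDiag'_mul_blockDiagonal' [DecidableEq o] [∀ i, Fintype (n' i)]
    [NonUnitalNonAssocSemiring α]
    (M : Matrix (Σ i, m' i) (Σ i, n' i) α) (N : ∀ i, Matrix (n' i) (p' i) α) (k : o) :
    blockDiag' (M * blockDiagonal' N) k = blockDiag' M k * N k := by
  ext i j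
  simp only [blockDiag'_apply, mul_apply, Fintype.sum_sigma]
  rw [Finset.sum_eq_single k]
  · simp [blockDiagonal'_apply_eq]
  · intro k' _ hk'
    simp [blockDiagonal'_apply_ne N _ _ hk']
  · simp

theorem dotProduct_blockDiagonal'_mulVec [DecidableEq o] [∀ i, Fintype (m' i)]
    [∀ i, Fintype (n' i)] [NonUnitalNonAssocSemiring α] (u : (Σ i, m' i) → α)
    (A : ∀ i, Matrix (m' i) (n' i) α) (v : (Σ i, n' i) → α) :
    u ⬝ᵥ blockDiagonal' A *ᵥ v = ∑ i, (fun j => u ⟨i, j⟩) ⬝ᵥ A i *ᵥ fun j => v ⟨i, j⟩ := by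
  simp only [dotProduct, mulVec, Fintype.sum_sigma]
  refine Finset.sum_congr rfl fun k _ => Finset.sum_congr rfl fun i _ => congrArg _ ?_
  rw [Finset.sum_eq_single k]
  · simp [blockDiagonal'_apply_eq]
  · intro k' _ hk'
    simp [blockDiagonal'_apply_ne A _ _ hk'.symm]
  · simp

variable {m n : Type*} [Fintype m] [Fintype n] {R : Type*} [CommSemiring R] [StarRing R]

theorem trace_conjTranspose_kronecker_mul_kronecker_one [DecidableEq n]
    (A M : Matrix m m R) (B : Matrix n n R) :
    trace ((A ⊗ₖ B)ᴴ * (M ⊗ₖ 1)) = trace (Aᴴ * M) * trace Bᴴ := by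
  rw [conjTranspose_kronecker, ← mul_kronecker_mul, Matrix.mul_one, trace_kronecker]

theorem star_vec_one_dotProduct_kronecker_one_mulVec_star_vec [DecidableEq m]
    (M X : Matrix m m R) :
    star (vec (1 : Matrix m m R)) ⬝ᵥ (M ⊗ₖ 1) *ᵥ star (vec X) = trace (Xᴴ * M) := by
  rw [star_vec X, kronecker_mulVec_vec, Matrix.one_mul, star_vec_dotProduct_vec, conjTranspose_one,
    Matrix.one_mul, ← trace_transpose, transpose_mul, transpose_transpose, trace_mul_comm]
  rfl

end Matrix

namespace GroupEstimation

open Matrix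
open scoped Kronecker

theorem inner_vecSq_vecSq {ι : Type} [Fintype ι] (A B : Matrix ι ι ℂ) :
    inner ℂ (vecSq A) (vecSq B) = trace (Aᴴ * B) := by
  simp only [EuclideanSpace.inner_eq_star_dotProduct, vecSq, dotProduct, Fintype.sum_prod_type,
    trace, diag, mul_apply, conjTranspose_apply]
  rw [Finset.sum_comm]
  simp [mul_comm]

variable {Λ : Type}

def Xmat (d n : Λ → ℕ) (Xm : ∀ l l' : Λ, Matrix (Fin (d l)) (Fin (d l')) ℂ)
    (Y : ∀ l l' : Λ, Fin (n l) × Fin (n l') → ℂ) :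
    Matrix (Σ l : Λ, Fin (d l) × Fin (n l)) (Σ l : Λ, Fin (d l) × Fin (n l)) ℂ :=
  of fun p q => (Xm p.1 q.1 ⊗ₖ of (Function.curry (Y p.1 q.1))) p.2 q.2

theorem Xvec_eq_vecSq_Xmat (d n : Λ → ℕ) (Xm : ∀ l l' : Λ, Matrix (Fin (d l)) (Fin (d l')) ℂ)
    (Y : ∀ l l' : Λ, Fin (n l) × Fin (n l') → ℂ) : Xvec d n Xm Y = vecSq (Xmat d n Xm Y) :=
  rfl

theorem inner_Xvec_vecSq_bigF [Fintype Λ] [DecidableEq Λ] {G : Type} (d n : Λ → ℕ)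
    (f_ : ∀ l : Λ, G → Matrix (Fin (d l)) (Fin (d l)) ℂ)
    (Xm : ∀ l l' : Λ, Matrix (Fin (d l)) (Fin (d l')) ℂ)
    (Y : ∀ l l' : Λ, Fin (n l) × Fin (n l') → ℂ) (g : G) :
    inner ℂ (Xvec d n Xm Y) (vecSq (bigF d n f_ g)) =
      ∑ l, trace ((Xm l l)ᴴ * f_ l g) * ∑ a, star (Y l l (a, a)) := by
  calc inner ℂ (Xvec d n Xm Y) (vecSq (bigF d n f_ g))
      = trace ((Xmat d n Xm Y)ᴴ * bigF d n f_ g) := by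
        rw [Xvec_eq_vecSq_Xmat, inner_vecSq_vecSq]
    _ = ∑ l, trace ((Xm l l ⊗ₖ of (Function.curry (Y l l)))ᴴ * (f_ l g ⊗ₖ 1)) := by
      simp only [trace_eq_sum_trace_blockDiag', bigF, blockDiag'_mul_blockDiagonal',
        blockDiag'_conjTranspose]
      rfl
    _ = _ := by
      refine Finset.sum_congr rfl fun l _ => ?_
      rw [trace_conjTranspose_kronecker_mul_kronecker_one, trace_conjTranspose]
      simp only [trace, diag, star_sum]
      rfl

theorem inner_Fvec_bigF'_mulVec_psiVec [Fintype Λ] [DecidableEq Λ] {G : Type} (d n : Λ → ℕ)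
    (hd : ∀ l, 0 < d l)
    (f_ : ∀ l : Λ, G → Matrix (Fin (d l)) (Fin (d l)) ℂ)
    (Xm : ∀ l l' : Λ, Matrix (Fin (d l)) (Fin (d l')) ℂ)
    (Y : ∀ l l' : Λ, Fin (n l) × Fin (n l') → ℂ) (g : G) :
    inner ℂ (Fvec d) (WithLp.toLp 2 ((bigF' d f_ g) *ᵥ WithLp.ofLp (psiVec d n Xm Y)) :
        EuclideanSpace ℂ (Σ l : Λ, Fin (d l) × Fin (d l))) =
      ∑ l, trace ((Xm l l)ᴴ * f_ l g) * ∑ a, star (Y l l (a, a)) := by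
  rw [EuclideanSpace.inner_eq_star_dotProduct, dotProduct_comm, bigF',
    dotProduct_blockDiagonal'_mulVec]
  refine Finset.sum_congr rfl fun l _ => ?_
  have hF : (fun j => star (WithLp.ofLp (Fvec d)) ⟨l, j⟩) =
      ((Real.sqrt (d l) : ℝ) : ℂ) • star (vec (1 : Matrix (Fin (d l)) (Fin (d l)) ℂ)) := by
    ext ⟨k, k'⟩
    simp only [Fvec, Pi.star_apply, Pi.smul_apply, vec, one_apply, smul_eq_mul]
    split_ifs <;> simp_all
  have hψ : (fun j => WithLp.ofLp (psiVec d n Xm Y) ⟨l, j⟩) =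
      (((((d l : ℝ)) ^ (-(1:ℝ)/2) : ℝ) : ℂ) * ∑ a, star (Y l l (a, a))) •
        star (vec (Xm l l)) := by
    ext ⟨k, k'⟩
    simp [psiVec, mul_assoc]
  have hsqrt : ((Real.sqrt (d l) : ℝ) : ℂ) * ((((d l : ℝ)) ^ (-(1:ℝ)/2) : ℝ) : ℂ) = 1 := by
    rw [← Complex.ofReal_mul, Real.sqrt_eq_rpow, ← Real.rpow_add (by exact_mod_cast hd l)]
    norm_num
  rw [hF, hψ, smul_dotProduct, mulVec_smul, dotProduct_smul,
    star_vec_one_dotProduct_kronecker_one_mulVec_star_vec]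
  simp only [smul_eq_mul]
  linear_combination (trace ((Xm l l)ᴴ * f_ l g) * ∑ a, star (Y l l (a, a))) * hsqrt

theorem inner_X_vec_eq_inner_F_psi_general
    {G : Type}
    {Λ : Type} [Fintype Λ] [DecidableEq Λ]
    (d n : Λ → ℕ) (hd : ∀ l, 0 < d l)
    (f_ : ∀ l : Λ, G → Matrix (Fin (d l)) (Fin (d l)) ℂ)
    (Xm : ∀ l l' : Λ, Matrix (Fin (d l)) (Fin (d l')) ℂ)
    (Y : ∀ l l' : Λ, Fin (n l) × Fin (n l') → ℂ)
    (g : G) :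
    (inner ℂ (Xvec d n Xm Y) (vecSq (bigF d n f_ g)) : ℂ) =
      (inner ℂ (Fvec d)
        ((WithLp.toLp 2 ((bigF' d f_ g).mulVec (WithLp.ofLp (psiVec d n Xm Y))) :
          EuclideanSpace ℂ (Σ l : Λ, Fin (d l) × Fin (d l)))) : ℂ) :=
  (inner_Xvec_vecSq_bigF d n f_ Xm Y g).trans
    (inner_Fvec_bigF'_mulVec_psiVec d n hd f_ Xm Y g).symm

/-- Key identity in the proof of Theorem 2: `⟪X, |f(g)⟩⟩⟫ = ⟪F, f'(g) ψ[T]⟫`. -/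
theorem inner_X_vec_eq_inner_F_psi
    {G : Type} [Group G] [TopologicalSpace G] [IsTopologicalGroup G]
    [CompactSpace G] [T2Space G] [MeasurableSpace G] [BorelSpace G]
    (μ : Measure G) [μ.IsHaarMeasure] [IsProbabilityMeasure μ]
    {Λ : Type} [Fintype Λ] [Nonempty Λ] [DecidableEq Λ]
    (d n : Λ → ℕ) (hd : ∀ l, 0 < d l) (hn : ∀ l, 0 < n l)
    (f_ : ∀ l : Λ, G → Matrix (Fin (d l)) (Fin (d l)) ℂ)
    (hf_cont : ∀ l, Continuous (f_ l))
    (hf_mul : ∀ (l : Λ) (g h : G), f_ l (g * h) = f_ l g * f_ l h)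
    (hf_one : ∀ l, f_ l 1 = 1)
    (hf_unit : ∀ (l : Λ) (g : G), f_ l g ∈ Matrix.unitaryGroup (Fin (d l)) ℂ)
    (hirr : ∀ (l : Λ) (p : Submodule ℂ (Fin (d l) → ℂ)),
      (∀ g : G, ∀ x ∈ p, (f_ l g).mulVec x ∈ p) → p = ⊥ ∨ p = ⊤)
    (hdis : ∀ l l' : Λ, l ≠ l' → ¬ ∃ S : Matrix (Fin (d l')) (Fin (d l)) ℂ,
      Function.Bijective S.mulVec ∧ ∀ g : G, S * f_ l g = f_ l' g * S)
    (Xm : ∀ l l' : Λ, Matrix (Fin (d l)) (Fin (d l')) ℂ)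
    (Y : ∀ l l' : Λ, Fin (n l) × Fin (n l') → ℂ)
    (g : G) :
    (inner ℂ (Xvec d n Xm Y) (vecSq (bigF d n f_ g)) : ℂ) =
      (inner ℂ (Fvec d)
        ((WithLp.toLp 2 ((bigF' d f_ g).mulVec (WithLp.ofLp (psiVec d n Xm Y))) :
          EuclideanSpace ℂ (Σ l : Λ, Fin (d l) × Fin (d l)))) : ℂ) :=
  inner_X_vec_eq_inner_F_psi_general d n hd f_ Xm Y g

end GroupEstimation
end
end

section
/- For every GPOVM M and every g : G, the twisted map M_g is again a GPOVM: M_g B is positive semidefinite for every Borel set B, M_g ∅ = 0, M_g (⋃ j, B j) = ∑' j, M_g (B j) for every countable pairwise disjoint family of Borel sets, and ((M_g Set.univ) * ρμ).trace = 1. -/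
open MeasureTheory
open scoped Kronecker Matrix ComplexOrder

noncomputable section

namespace GroupEstimation

variable {G : Type} [Group G] [TopologicalSpace G] [IsTopologicalGroup G]
  [CompactSpace G] [T2Space G] [MeasurableSpace G] [BorelSpace G]

/-- Vectorization of a square matrix. -/
def vec {d : ℕ} (A : Matrix (Fin d) (Fin d) ℂ) : EuclideanSpace ℂ (Fin d × Fin d) :=
  WithLp.toLp 2 fun p => A p.1 p.2

/-- The rank-one state `|f(g)⟩⟩⟨⟨f(g)|`. -/
def rho {d : ℕ} (f : G → Matrix (Fin d) (Fin d) ℂ) (g : G) :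
    Matrix (Fin d × Fin d) (Fin d × Fin d) ℂ :=
  fun p q => f g p.1 p.2 * star (f g q.1 q.2)

/-- `A g = f g ⊗ₖ 1`. -/
def Amat {d : ℕ} (f : G → Matrix (Fin d) (Fin d) ℂ) (g : G) :
    Matrix (Fin d × Fin d) (Fin d × Fin d) ℂ :=
  f g ⊗ₖ (1 : Matrix (Fin d) (Fin d) ℂ)

/-- The average state `ρμ` (entrywise Bochner integral). -/
def rhoMu (μ : Measure G) {d : ℕ} (f : G → Matrix (Fin d) (Fin d) ℂ) :
    Matrix (Fin d × Fin d) (Fin d × Fin d) ℂ :=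
  fun p q => ∫ g, rho f g p q ∂μ

/-- positivity, vanishing at ∅ and countable additivity (the "measure part" of a GPOVM). -/
def IsPreGPOVM {d : ℕ} (M : Set G → Matrix (Fin d × Fin d) (Fin d × Fin d) ℂ) : Prop :=
  (∀ B : Set G, MeasurableSet B → (M B).PosSemidef) ∧ M ∅ = 0 ∧
    ∀ B : ℕ → Set G, (∀ j, MeasurableSet (B j)) → Pairwise (Function.onFun Disjoint B) →
      M (⋃ j, B j) = ∑' j, M (B j)

/-- Generalized POVM. -/
def IsGPOVM (μ : Measure G) {d : ℕ} (f : G → Matrix (Fin d) (Fin d) ℂ)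
    (M : Set G → Matrix (Fin d × Fin d) (Fin d × Fin d) ℂ) : Prop :=
  IsPreGPOVM M ∧ (M Set.univ * rhoMu μ f).trace = 1

/-- Covariance of a GPOVM. -/
def IsCovariant {d : ℕ} (f : G → Matrix (Fin d) (Fin d) ℂ)
    (M : Set G → Matrix (Fin d × Fin d) (Fin d × Fin d) ℂ) : Prop :=
  ∀ (g : G) (B : Set G), MeasurableSet B →
    M ((g * ·) '' B) = Amat f g * M B * (Amat f g)ᴴ

/-- The covariant GPOVM with seed `T`. -/
def MT (μ : Measure G) {d : ℕ} (f : G → Matrix (Fin d) (Fin d) ℂ)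
    (T : Matrix (Fin d × Fin d) (Fin d × Fin d) ℂ) (B : Set G) :
    Matrix (Fin d × Fin d) (Fin d × Fin d) ℂ :=
  fun p q => ∫ g in B, (Amat f g * T * (Amat f g)ᴴ) p q ∂μ

/-- Pointwise risk. -/
def Dpt {d : ℕ} (w : G → G → ℝ)
    (ν : (Set G → Matrix (Fin d × Fin d) (Fin d × Fin d) ℂ) → G → Measure G)
    (M : Set G → Matrix (Fin d × Fin d) (Fin d × Fin d) ℂ) (g : G) : ℝ :=
  ∫ gh, w g gh ∂(ν M g)

/-- Bayes risk. -/
def Dbayes (μ : Measure G) {d : ℕ} (w : G → G → ℝ)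
    (ν : (Set G → Matrix (Fin d × Fin d) (Fin d × Fin d) ℂ) → G → Measure G)
    (M : Set G → Matrix (Fin d × Fin d) (Fin d × Fin d) ℂ) : ℝ :=
  ∫ g, Dpt w ν M g ∂μ

/-- Minimax risk. -/
def Dmax {d : ℕ} (w : G → G → ℝ)
    (ν : (Set G → Matrix (Fin d × Fin d) (Fin d × Fin d) ℂ) → G → Measure G)
    (M : Set G → Matrix (Fin d × Fin d) (Fin d × Fin d) ℂ) : ℝ :=
  ⨆ g : G, Dpt w ν M g

/-- Twisted GPOVM `M_g`. -/
def twist {d : ℕ} (f : G → Matrix (Fin d) (Fin d) ℂ)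
    (M : Set G → Matrix (Fin d × Fin d) (Fin d × Fin d) ℂ) (g : G) (B : Set G) :
    Matrix (Fin d × Fin d) (Fin d × Fin d) ℂ :=
  (Amat f g)ᴴ * M ((g * ·) '' B) * Amat f g

/-- Matrix of the orthogonal projection onto span {v g}. -/
def P0 {d : ℕ} (f : G → Matrix (Fin d) (Fin d) ℂ) :
    Matrix (Fin d × Fin d) (Fin d × Fin d) ℂ :=
  Matrix.toEuclideanLin.symm
    ((Submodule.span ℂ (Set.range fun g => vec (f g))).subtype ∘ₗ
      (Submodule.orthogonalProjectionOnto (Submodule.span ℂ (Set.range fun g => vec (f g)))).toLinearMap)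

end GroupEstimation

/-! Conjugation by the unitary `A g` preserves positive semidefiniteness and commutes with infinite
sums, and left translation by `g` is a measurable bijection of `G`, so `M_g` inherits the measure
part of a GPOVM. For the normalisation, cyclicity of the trace gives
`tr (M_g(G) ρμ) = tr (M(G) · A g ρμ (A g)ᴴ)`. Now `A g (vec f(h)) = vec (f g f h)`, which agrees
with `vec f(gh)` up to the phase `c g h`, so `A g ρ(h) (A g)ᴴ = ρ(gh)`; averaging over `h` and
using the left invariance of Haar measure gives `A g ρμ (A g)ᴴ = ρμ`. -/

open Matrix

theorem tsum_star_mul_mul_of_mem_unitary {R ι : Type*} [Ring R] [StarRing R] [TopologicalSpace R]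
    [IsTopologicalRing R] [T2Space R] {u : R} (hu : u ∈ unitary R) (f : ι → R) :
    ∑' i, star u * f i * u = star u * (∑' i, f i) * u := by
  let conj : R →+ R := (AddMonoidHom.mulRight u).comp (AddMonoidHom.mulLeft (star u))
  refine (Function.LeftInverse.map_tsum f (g := conj) ((continuous_const_mul _).mul_const _)
    (g' := fun x => u * x * star u) ((continuous_const_mul _).mul_const _) fun x => ?_).symm
  simp only [conj, AddMonoidHom.comp_apply, AddMonoidHom.coe_mulLeft, AddMonoidHom.coe_mulRight,
    ← mul_assoc, Unitary.mul_star_self_of_mem hu, one_mul]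
  rw [mul_assoc, Unitary.mul_star_self_of_mem hu, mul_one]

namespace Matrix

variable {m n α : Type*} [CommRing α] [StarRing α]

theorem mul_vecMulVec_star_mul_conjTranspose [Fintype n] (A : Matrix m n α) (v : n → α) :
    A * vecMulVec v (star v) * Aᴴ = vecMulVec (A *ᵥ v) (star (A *ᵥ v)) := by
  rw [mul_vecMulVec, vecMulVec_mul, star_mulVec]

theorem vecMulVec_smul_star_smul {a : α} (ha : a ∈ unitary α) (v : n → α) :
    vecMulVec (a • v) (star (a • v)) = vecMulVec v (star v) := by
  ext i j
  simp only [vecMulVec_apply, Pi.smul_apply, Pi.star_apply, smul_eq_mul, star_mul']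
  linear_combination v i * star (v j) * Unitary.mul_star_self_of_mem ha

theorem integral_mul_mul_apply {X 𝕜 l m n o : Type*} [MeasurableSpace X] {μ : Measure X}
    [RCLike 𝕜] [Fintype m] [Fintype n] (A : Matrix l m 𝕜) (F : X → Matrix m n 𝕜)
    (B : Matrix n o 𝕜) (hF : ∀ r s, Integrable (fun x => F x r s) μ) (i : l) (j : o) :
    ∫ x, (A * F x * B) i j ∂μ = (A * of (fun r s => ∫ x, F x r s ∂μ) * B) i j := by
  simp only [mul_apply, of_apply, Finset.sum_mul]
  rw [integral_finsetSum _ fun s _ => integrable_finsetSum _ fun r _ =>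
    ((hF r s).const_mul _).mul_const _]
  refine Finset.sum_congr rfl fun s _ => ?_
  rw [integral_finsetSum _ fun r _ => ((hF r s).const_mul _).mul_const _]
  refine Finset.sum_congr rfl fun r _ => ?_
  rw [integral_mul_const, integral_const_mul]

end Matrix

namespace GroupEstimation

section

variable {G : Type} {d : ℕ}

theorem IsPreGPOVM.unitary_conj_image [MeasurableSpace G]
    {M : Set G → Matrix (Fin d × Fin d) (Fin d × Fin d) ℂ} (hM : IsPreGPOVM M)
    {U : Matrix (Fin d × Fin d) (Fin d × Fin d) ℂ}
    (hU : U ∈ unitaryGroup (Fin d × Fin d) ℂ) (e : G ≃ᵐ G) :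
    IsPreGPOVM fun B => Uᴴ * M (e '' B) * U := by
  obtain ⟨hpos, hempty, hadd⟩ := hM
  refine ⟨fun B hB => (hpos _ (e.measurableSet_image.mpr hB)).conjTranspose_mul_mul_same U,
    by simp [hempty], fun B hB hdisj => ?_⟩
  have hdisj' : Pairwise (Function.onFun Disjoint fun j => e '' B j) := fun i j hij =>
    (Set.disjoint_image_iff e.injective).mpr (hdisj hij)
  beta_reduce
  rw [Set.image_iUnion, hadd _ (fun j => e.measurableSet_image.mpr (hB j)) hdisj']
  exact (tsum_star_mul_mul_of_mem_unitary hU _).symm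

theorem Amat_mem_unitaryGroup (f : G → Matrix (Fin d) (Fin d) ℂ) {g : G}
    (hg : f g ∈ unitaryGroup (Fin d) ℂ) : Amat f g ∈ unitaryGroup (Fin d × Fin d) ℂ :=
  kronecker_mem_unitary hg (one_mem _)

-- Mathlib's `Matrix.vec` stacks columns; the row-major `vec A` used here is `Matrix.vec Aᵀ`.
theorem rho_eq_vecMulVec (f : G → Matrix (Fin d) (Fin d) ℂ) (h : G) :
    rho f h = vecMulVec (Matrix.vec (f h)ᵀ) (star (Matrix.vec (f h)ᵀ)) :=
  rfl

theorem Amat_mulVec_vec_transpose (f : G → Matrix (Fin d) (Fin d) ℂ) (g : G)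
    (X : Matrix (Fin d) (Fin d) ℂ) : Amat f g *ᵥ Matrix.vec Xᵀ = Matrix.vec (f g * X)ᵀ := by
  rw [Amat, kronecker_mulVec_vec, Matrix.one_mul, transpose_mul]

theorem Amat_mul_rho_mul_conjTranspose [Group G] (f : G → Matrix (Fin d) (Fin d) ℂ)
    {c : G → G → ℂ} (hc_norm : ∀ g h : G, ‖c g h‖ = 1)
    (hc_proj : ∀ g h : G, f (g * h) = c g h • (f g * f h)) (g h : G) :
    Amat f g * rho f h * (Amat f g)ᴴ = rho f (g * h) := by
  have hc : c g h ∈ unitary ℂ := by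
    rw [Unitary.mem_iff_star_mul_self, RCLike.star_def, RCLike.conj_mul, hc_norm]
    norm_num
  rw [rho_eq_vecMulVec, mul_vecMulVec_star_mul_conjTranspose, Amat_mulVec_vec_transpose,
    rho_eq_vecMulVec, hc_proj, transpose_smul]
  exact (vecMulVec_smul_star_smul hc _).symm

theorem integrable_rho_apply [MeasurableSpace G] [TopologicalSpace G] [CompactSpace G]
    [OpensMeasurableSpace G] (μ : Measure G) [IsFiniteMeasureOnCompacts μ]
    {f : G → Matrix (Fin d) (Fin d) ℂ} (hf : Continuous f) (p q : Fin d × Fin d) :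
    Integrable (fun h => rho f h p q) μ := by
  have hcont : Continuous fun h => rho f h p q := by unfold rho; fun_prop
  exact hcont.integrable_of_hasCompactSupport (.of_compactSpace _)

theorem Amat_mul_rhoMu_mul_conjTranspose [Group G] [MeasurableSpace G] [TopologicalSpace G]
    [CompactSpace G] [OpensMeasurableSpace G] [MeasurableMul G] (μ : Measure G) [μ.IsHaarMeasure]
    {f : G → Matrix (Fin d) (Fin d) ℂ} (hf : Continuous f)
    {c : G → G → ℂ} (hc_norm : ∀ g h : G, ‖c g h‖ = 1)
    (hc_proj : ∀ g h : G, f (g * h) = c g h • (f g * f h)) (g : G) :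
    Amat f g * rhoMu μ f * (Amat f g)ᴴ = rhoMu μ f := by
  ext p q
  calc (Amat f g * rhoMu μ f * (Amat f g)ᴴ) p q
      = ∫ h, (Amat f g * rho f h * (Amat f g)ᴴ) p q ∂μ :=
        (integral_mul_mul_apply _ _ _ (integrable_rho_apply μ hf) p q).symm
    _ = ∫ h, rho f (g * h) p q ∂μ := by
        simp_rw [Amat_mul_rho_mul_conjTranspose f hc_norm hc_proj]
    _ = rhoMu μ f p q := integral_mul_left_eq_self (fun h => rho f h p q) g

theorem trace_twist_univ_mul_rhoMu [Group G] [MeasurableSpace G] [TopologicalSpace G]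
    [CompactSpace G] [OpensMeasurableSpace G] [MeasurableMul G] (μ : Measure G) [μ.IsHaarMeasure]
    {f : G → Matrix (Fin d) (Fin d) ℂ} (hf : Continuous f)
    {c : G → G → ℂ} (hc_norm : ∀ g h : G, ‖c g h‖ = 1)
    (hc_proj : ∀ g h : G, f (g * h) = c g h • (f g * f h))
    (M : Set G → Matrix (Fin d × Fin d) (Fin d × Fin d) ℂ) (g : G) :
    (twist f M g Set.univ * rhoMu μ f).trace = (M Set.univ * rhoMu μ f).trace := by
  calc (twist f M g Set.univ * rhoMu μ f).trace
      = ((Amat f g)ᴴ * M Set.univ * Amat f g * rhoMu μ f).trace := by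
        rw [twist, Set.image_univ_of_surjective (mul_left_surjective g)]
    _ = (M Set.univ * (Amat f g * rhoMu μ f * (Amat f g)ᴴ)).trace := by
        rw [Matrix.mul_assoc, Matrix.mul_assoc, trace_mul_comm]
        simp only [Matrix.mul_assoc]
    _ = (M Set.univ * rhoMu μ f).trace := by
        rw [Amat_mul_rhoMu_mul_conjTranspose μ hf hc_norm hc_proj]

end

theorem twist_isGPOVM_general
    {G : Type} [Group G] [TopologicalSpace G] [IsTopologicalGroup G]
    [CompactSpace G] [MeasurableSpace G] [BorelSpace G]
    (μ : Measure G) [μ.IsHaarMeasure]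
    {d : ℕ} (f : G → Matrix (Fin d) (Fin d) ℂ)
    (hf_cont : Continuous f)
    (hf_unitary : ∀ g : G, f g ∈ Matrix.unitaryGroup (Fin d) ℂ)
    (c : G → G → ℂ) (hc_norm : ∀ g h : G, ‖c g h‖ = 1)
    (hc_proj : ∀ g h : G, f (g * h) = c g h • (f g * f h))
    (M : Set G → Matrix (Fin d × Fin d) (Fin d × Fin d) ℂ)
    (hM : IsGPOVM μ f M) (g : G) :
    (∀ B : Set G, MeasurableSet B → (twist f M g B).PosSemidef) ∧
    twist f M g ∅ = 0 ∧
    (∀ B : ℕ → Set G, (∀ j, MeasurableSet (B j)) → Pairwise (Function.onFun Disjoint B) →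
      twist f M g (⋃ j, B j) = ∑' j, twist f M g (B j)) ∧
    (twist f M g Set.univ * rhoMu μ f).trace = 1 := by
  obtain ⟨hpre, htrace⟩ := hM
  obtain ⟨hpos, hempty, hadd⟩ := hpre.unitary_conj_image
    (Amat_mem_unitaryGroup f (hf_unitary g)) (MeasurableEquiv.mulLeft g)
  exact ⟨hpos, hempty, hadd,
    (trace_twist_univ_mul_rhoMu μ hf_cont hc_norm hc_proj M g).trans htrace⟩

/-- The twisted map `M_g` of a GPOVM is again a GPOVM. -/
theorem twist_isGPOVM
    {G : Type} [Group G] [TopologicalSpace G] [IsTopologicalGroup G]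
    [CompactSpace G] [T2Space G] [MeasurableSpace G] [BorelSpace G]
    (μ : Measure G) [μ.IsHaarMeasure] [IsProbabilityMeasure μ]
    {d : ℕ} (hd : 0 < d) (f : G → Matrix (Fin d) (Fin d) ℂ)
    (hf_cont : Continuous f) (hf_one : f 1 = 1)
    (hf_unitary : ∀ g : G, f g ∈ Matrix.unitaryGroup (Fin d) ℂ)
    (c : G → G → ℂ) (hc_norm : ∀ g h : G, ‖c g h‖ = 1)
    (hc_proj : ∀ g h : G, f (g * h) = c g h • (f g * f h))
    (M : Set G → Matrix (Fin d × Fin d) (Fin d × Fin d) ℂ)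
    (hM : IsGPOVM μ f M) (g : G) :
    (∀ B : Set G, MeasurableSet B → (twist f M g B).PosSemidef) ∧
    twist f M g ∅ = 0 ∧
    (∀ B : ℕ → Set G, (∀ j, MeasurableSet (B j)) → Pairwise (Function.onFun Disjoint B) →
      twist f M g (⋃ j, B j) = ∑' j, twist f M g (B j)) ∧
    (twist f M g Set.univ * rhoMu μ f).trace = 1 :=
  twist_isGPOVM_general μ f hf_cont hf_unitary c hc_norm hc_proj M hM g

end GroupEstimation
end
end

section
/- (Block formula for the average state, Section 3) The entries of ρμ are given by: ρμ (⟨λ, (k, a)⟩, ⟨λ', (k', a')⟩) (⟨σ, (l, b)⟩, ⟨σ', (l', b')⟩) equals (d λ : ℂ)⁻¹ when λ = λ' = σ = σ' and (under these identifications) k = l, k' = l', a = a', b = b', and equals 0 otherwise. Equivalently, ρμ is the block-diagonal matrix ⊕_λ (d λ)⁻¹ • (1_{d λ} ⊗ 1_{d λ} ⊗ |vec (1_{n λ})⟩⟨vec (1_{n λ})|). -/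
/-!
Schur orthogonality. For unitary representations `F` and `E`, left invariance of the Haar measure
makes the average `twirl μ F E A = ∫ F g * A * (E g)ᴴ dμ(g)` an intertwiner from `E` to `F`. By
Schur's lemma it vanishes when `F` and `E` are irreducible and inequivalent, and for `E = F` it is a
scalar, which the trace (preserved by averaging) pins down as `tr A / dim`. Taking `A` a matrix unit
gives `∫ F g i j * conj (F g k l) = δ_ik δ_jl / dim` and `∫ F g i j * conj (E g k l) = 0`; the
entries of `ρμ` are these integrals times the Kronecker deltas of the factors `1_{n λ}`.
-/

open MeasureTheory
open scoped Kronecker Matrix ComplexOrder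

noncomputable section

open Matrix

theorem Matrix.mulVecLin_eq_zero_iff {R ι κ : Type*} [CommSemiring R] [Fintype κ]
    {T : Matrix ι κ R} : T.mulVecLin = 0 ↔ T = 0 := by
  classical
  rw [← Matrix.toLin'_apply', LinearEquiv.map_eq_zero_iff]

section Schur

variable {G : Type*} {ι κ : Type*} [Fintype ι] [Fintype κ]

def IsIrreducibleRep (F : G → Matrix ι ι ℂ) : Prop :=
  ∀ p : Submodule ℂ (ι → ℂ), (∀ g, ∀ x ∈ p, F g *ᵥ x ∈ p) → p = ⊥ ∨ p = ⊤

variable {F : G → Matrix ι ι ℂ} {E : G → Matrix κ κ ℂ} {T : Matrix ι κ ℂ}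

theorem eq_zero_or_injective_of_intertwines (hE : IsIrreducibleRep E)
    (hT : ∀ g, F g * T = T * E g) : T = 0 ∨ Function.Injective T.mulVec := by
  have hinv : ∀ g, ∀ x ∈ LinearMap.ker T.mulVecLin, E g *ᵥ x ∈ LinearMap.ker T.mulVecLin := by
    intro g x hx
    simp only [LinearMap.mem_ker, mulVecLin_apply] at hx ⊢
    rw [mulVec_mulVec, ← hT, ← mulVec_mulVec, hx, mulVec_zero]
  rcases hE _ hinv with h | h
  · exact Or.inr (LinearMap.ker_eq_bot.mp h)
  · exact Or.inl (mulVecLin_eq_zero_iff.mp (LinearMap.ker_eq_top.mp h))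

theorem eq_zero_or_surjective_of_intertwines (hF : IsIrreducibleRep F)
    (hT : ∀ g, F g * T = T * E g) : T = 0 ∨ Function.Surjective T.mulVec := by
  have hinv : ∀ g, ∀ x ∈ LinearMap.range T.mulVecLin, F g *ᵥ x ∈ LinearMap.range T.mulVecLin := by
    rintro g _ ⟨y, rfl⟩
    exact ⟨E g *ᵥ y, by simp only [mulVecLin_apply, mulVec_mulVec, hT]⟩
  rcases hF _ hinv with h | h
  · exact Or.inl (mulVecLin_eq_zero_iff.mp (LinearMap.range_eq_bot.mp h))
  · exact Or.inr (LinearMap.range_eq_top.mp h)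

theorem eq_zero_of_intertwines_of_not_equiv (hF : IsIrreducibleRep F) (hE : IsIrreducibleRep E)
    (hFE : ¬ ∃ S : Matrix ι κ ℂ, Function.Bijective S.mulVec ∧ ∀ g, S * E g = F g * S)
    (hT : ∀ g, F g * T = T * E g) : T = 0 := by
  rcases eq_zero_or_injective_of_intertwines hE hT with h | hinj
  · exact h
  rcases eq_zero_or_surjective_of_intertwines hF hT with h | hsurj
  · exact h
  exact absurd ⟨T, ⟨hinj, hsurj⟩, fun g => (hT g).symm⟩ hFE

theorem exists_eq_smul_one_of_commutes [DecidableEq ι] [Nonempty ι]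
    (hF : IsIrreducibleRep F) {T : Matrix ι ι ℂ} (hT : ∀ g, F g * T = T * F g) :
    ∃ c : ℂ, T = c • 1 := by
  obtain ⟨c, hc⟩ := Module.End.exists_eigenvalue T.mulVecLin
  obtain ⟨v, hv⟩ := hc.exists_hasEigenvector
  refine ⟨c, sub_eq_zero.mp ?_⟩
  have hcomm : ∀ g, F g * (T - c • 1) = (T - c • 1) * F g := fun g => by
    simp only [Matrix.mul_sub, Matrix.sub_mul, Matrix.mul_smul, Matrix.smul_mul,
      Matrix.mul_one, Matrix.one_mul, hT g]
  refine (eq_zero_or_injective_of_intertwines hF hcomm).resolve_right fun hinj => hv.2 (hinj ?_)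
  rw [sub_mulVec, mulVec_zero, smul_mulVec, one_mulVec, sub_eq_zero]
  exact hv.apply_eq_smul

end Schur

section Twirl

variable {G : Type*} [MeasurableSpace G] (μ : Measure G) {ι κ ι' κ' : Type*}
  [Fintype ι] [Fintype κ]

theorem mul_entrywise_integral_mul [Fintype ι'] (M : Matrix ι' ι ℂ) (N : Matrix κ κ' ℂ)
    {Φ : G → Matrix ι κ ℂ} (hΦ : ∀ i j, Integrable (fun g => Φ g i j) μ) :
    M * (of fun i j => ∫ g, Φ g i j ∂μ) * N = of fun i j => ∫ g, (M * Φ g * N) i j ∂μ := by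
  ext i j
  simp only [mul_apply, of_apply]
  rw [integral_finsetSum _ fun q _ => (integrable_finsetSum _ fun p _ =>
    (hΦ p q).const_mul _).mul_const _]
  refine Finset.sum_congr rfl fun q _ => ?_
  rw [integral_mul_const, integral_finsetSum _ fun p _ => (hΦ p q).const_mul _]
  simp only [integral_const_mul]

def twirl (F : G → Matrix ι ι ℂ) (E : G → Matrix κ κ ℂ) (A : Matrix ι κ ℂ) : Matrix ι κ ℂ :=
  of fun i j => ∫ g, (F g * A * star (E g)) i j ∂μ

variable {F : G → Matrix ι ι ℂ} {E : G → Matrix κ κ ℂ}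

theorem twirl_single_one_apply [DecidableEq ι] [DecidableEq κ] (i j : ι) (k l : κ) :
    twirl μ F E (single j l 1) i k = ∫ g, F g i j * star (E g k l) ∂μ := by
  simp [twirl, mul_apply, single, star_apply, ite_and, Finset.sum_ite_eq]

variable [TopologicalSpace G] [CompactSpace G] [OpensMeasurableSpace G] [IsFiniteMeasure μ]

theorem integrable_conj_apply (hF : Continuous F) (hE : Continuous E) (A : Matrix ι κ ℂ)
    (i : ι) (j : κ) : Integrable (fun g => (F g * A * star (E g)) i j) μ :=
  (((hF.matrix_mul continuous_const).matrix_mul hE.star).matrix_elem i j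
    ).integrable_of_hasCompactSupport (.of_compactSpace _)

theorem trace_twirl [IsProbabilityMeasure μ] [DecidableEq ι] (hF : Continuous F)
    (hF_unit : ∀ g, F g ∈ unitaryGroup ι ℂ) (A : Matrix ι ι ℂ) :
    trace (twirl μ F F A) = trace A := by
  calc trace (twirl μ F F A) = ∫ g, trace (F g * A * star (F g)) ∂μ :=
        (integral_finsetSum _ fun i _ => integrable_conj_apply μ hF hF A i i).symm
    _ = ∫ _, trace A ∂μ := by
        congr with g
        rw [trace_mul_cycle, Unitary.star_mul_self_of_mem (hF_unit g), Matrix.one_mul]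
    _ = trace A := by simp

variable [Group G] [MeasurableMul G] [μ.IsMulLeftInvariant]

theorem conj_twirl (hF : Continuous F) (hE : Continuous E)
    (hF_mul : ∀ g h, F (g * h) = F g * F h) (hE_mul : ∀ g h, E (g * h) = E g * E h)
    (A : Matrix ι κ ℂ) (h : G) : F h * twirl μ F E A * star (E h) = twirl μ F E A := by
  rw [twirl, mul_entrywise_integral_mul μ _ _ (integrable_conj_apply μ hF hE A)]
  ext i j
  simp only [of_apply]
  calc ∫ g, (F h * (F g * A * star (E g)) * star (E h)) i j ∂μ
      = ∫ g, (F (h * g) * A * star (E (h * g))) i j ∂μ := by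
        simp only [hF_mul, hE_mul, star_mul, Matrix.mul_assoc]
    _ = ∫ g, (F g * A * star (E g)) i j ∂μ :=
        integral_mul_left_eq_self (fun g => (F g * A * star (E g)) i j) h

theorem twirl_intertwines [DecidableEq κ] (hF : Continuous F) (hE : Continuous E)
    (hF_mul : ∀ g h, F (g * h) = F g * F h) (hE_mul : ∀ g h, E (g * h) = E g * E h)
    (hE_unit : ∀ g, E g ∈ unitaryGroup κ ℂ) (A : Matrix ι κ ℂ) (h : G) :
    F h * twirl μ F E A = twirl μ F E A * E h := by
  calc F h * twirl μ F E A = F h * twirl μ F E A * (star (E h) * E h) := by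
        rw [Unitary.star_mul_self_of_mem (hE_unit h), Matrix.mul_one]
    _ = twirl μ F E A * E h := by
        rw [← Matrix.mul_assoc, conj_twirl μ hF hE hF_mul hE_mul]

theorem twirl_self_eq [IsProbabilityMeasure μ] [DecidableEq ι] [Nonempty ι]
    (hF : Continuous F) (hF_mul : ∀ g h, F (g * h) = F g * F h)
    (hF_unit : ∀ g, F g ∈ unitaryGroup ι ℂ) (hF_irr : IsIrreducibleRep F) (A : Matrix ι ι ℂ) :
    twirl μ F F A = ((Fintype.card ι : ℂ)⁻¹ * trace A) • 1 := by
  obtain ⟨c, hc⟩ := exists_eq_smul_one_of_commutes hF_irr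
    (twirl_intertwines μ hF hF hF_mul hF_mul hF_unit A)
  have htr := trace_twirl μ hF hF_unit A
  rw [hc, trace_smul, trace_one, smul_eq_mul] at htr
  rw [hc, ← htr, mul_comm c, inv_mul_cancel_left₀ (Nat.cast_ne_zero.mpr Fintype.card_ne_zero)]

theorem integral_mul_star_eq_zero_of_not_equiv [DecidableEq κ] (hF : Continuous F)
    (hE : Continuous E) (hF_mul : ∀ g h, F (g * h) = F g * F h)
    (hE_mul : ∀ g h, E (g * h) = E g * E h) (hE_unit : ∀ g, E g ∈ unitaryGroup κ ℂ)
    (hF_irr : IsIrreducibleRep F) (hE_irr : IsIrreducibleRep E)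
    (hFE : ¬ ∃ S : Matrix ι κ ℂ, Function.Bijective S.mulVec ∧ ∀ g, S * E g = F g * S)
    (i j : ι) (k l : κ) : ∫ g, F g i j * star (E g k l) ∂μ = 0 := by
  classical
  rw [← twirl_single_one_apply, eq_zero_of_intertwines_of_not_equiv hF_irr hE_irr hFE
    (twirl_intertwines μ hF hE hF_mul hE_mul hE_unit _), Matrix.zero_apply]

theorem integral_mul_star_self [IsProbabilityMeasure μ] [DecidableEq ι] (hF : Continuous F)
    (hF_mul : ∀ g h, F (g * h) = F g * F h) (hF_unit : ∀ g, F g ∈ unitaryGroup ι ℂ)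
    (hF_irr : IsIrreducibleRep F) (i j k l : ι) :
    ∫ g, F g i j * star (F g k l) ∂μ =
      if i = k ∧ j = l then (Fintype.card ι : ℂ)⁻¹ else 0 := by
  have : Nonempty ι := ⟨i⟩
  rw [← twirl_single_one_apply, twirl_self_eq μ hF hF_mul hF_unit hF_irr, Matrix.smul_apply,
    one_apply]
  by_cases hjl : j = l
  · subst hjl
    by_cases hik : i = k <;> simp [hik]
  · simp [trace_single_eq_of_ne _ _ _ hjl, hjl]

end Twirl

namespace GroupEstimation

variable {G : Type} [MeasurableSpace G] {Λ : Type} [DecidableEq Λ] (μ : Measure G) (d n : Λ → ℕ)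
  (f_ : ∀ l : Λ, G → Matrix (Fin (d l)) (Fin (d l)) ℂ)

theorem rhoMuB_apply_of_diag (l σ : Λ) (k k₂ : Fin (d l)) (m m₂ : Fin (d σ))
    (a a₂ : Fin (n l)) (b b₂ : Fin (n σ)) :
    rhoMuB μ d n f_ (⟨l, (k, a)⟩, ⟨l, (k₂, a₂)⟩) (⟨σ, (m, b)⟩, ⟨σ, (m₂, b₂)⟩) =
      (if a = a₂ ∧ b = b₂ then 1 else 0) * ∫ g, f_ l g k k₂ * star (f_ σ g m m₂) ∂μ := by
  rw [← integral_const_mul]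
  refine integral_congr_ae (.of_forall fun g => ?_)
  by_cases ha : a = a₂ <;> by_cases hb : b = b₂ <;>
    simp [bigF, blockDiagonal'_apply_eq, one_apply, ha, hb]

theorem rhoMuB_apply_eq_zero_of_not_diag
    (p q : (Σ l : Λ, Fin (d l) × Fin (n l)) × (Σ l : Λ, Fin (d l) × Fin (n l)))
    (h : p.1.1 ≠ p.2.1 ∨ q.1.1 ≠ q.2.1) : rhoMuB μ d n f_ p q = 0 := by
  suffices ∀ g, bigF d n f_ g p.1 p.2 * star (bigF d n f_ g q.1 q.2) = 0 by
    simp only [rhoMuB, this, integral_zero]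
  intro g
  rcases h with h | h <;> simp [bigF, blockDiagonal'_apply_ne _ _ _ h]

theorem rhoMuB_entries_general
    {G : Type} [Group G] [TopologicalSpace G] [IsTopologicalGroup G]
    [CompactSpace G] [MeasurableSpace G] [BorelSpace G]
    (μ : Measure G) [μ.IsHaarMeasure] [IsProbabilityMeasure μ]
    {Λ : Type} [DecidableEq Λ]
    (d n : Λ → ℕ)
    (f_ : ∀ l : Λ, G → Matrix (Fin (d l)) (Fin (d l)) ℂ)
    (hf_cont : ∀ l, Continuous (f_ l))
    (hf_mul : ∀ (l : Λ) (g h : G), f_ l (g * h) = f_ l g * f_ l h)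
    (hf_unit : ∀ (l : Λ) (g : G), f_ l g ∈ Matrix.unitaryGroup (Fin (d l)) ℂ)
    (hirr : ∀ (l : Λ) (p : Submodule ℂ (Fin (d l) → ℂ)),
      (∀ g : G, ∀ x ∈ p, (f_ l g).mulVec x ∈ p) → p = ⊥ ∨ p = ⊤)
    (hdis : ∀ l l' : Λ, l ≠ l' → ¬ ∃ S : Matrix (Fin (d l')) (Fin (d l)) ℂ,
      Function.Bijective S.mulVec ∧ ∀ g : G, S * f_ l g = f_ l' g * S)
    :
    (∀ (l : Λ) (k k₂ m m₂ : Fin (d l)) (a a₂ b b₂ : Fin (n l)),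
      rhoMuB μ d n f_ (⟨l, (k, a)⟩, ⟨l, (k₂, a₂)⟩) (⟨l, (m, b)⟩, ⟨l, (m₂, b₂)⟩) =
        if k = m ∧ k₂ = m₂ ∧ a = a₂ ∧ b = b₂ then ((d l : ℂ))⁻¹ else 0) ∧
    (∀ p q : (Σ l : Λ, Fin (d l) × Fin (n l)) × (Σ l : Λ, Fin (d l) × Fin (n l)),
      ¬(p.1.1 = p.2.1 ∧ p.1.1 = q.1.1 ∧ p.1.1 = q.2.1) → rhoMuB μ d n f_ p q = 0) := by
  constructor
  · intro l k k₂ m m₂ a a₂ b b₂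
    rw [rhoMuB_apply_of_diag, integral_mul_star_self μ (hf_cont l) (hf_mul l) (hf_unit l)
      (hirr l), Fintype.card_fin]
    split_ifs <;> simp_all
  · rintro ⟨⟨l, k, a⟩, ⟨l₂, k₂, a₂⟩⟩ ⟨⟨σ, m, b⟩, ⟨σ₂, m₂, b₂⟩⟩ hne
    by_cases hdiag : l = l₂ ∧ σ = σ₂
    · obtain ⟨rfl, rfl⟩ := hdiag
      have hlσ : l ≠ σ := fun h => hne ⟨rfl, h, h⟩
      rw [rhoMuB_apply_of_diag, integral_mul_star_eq_zero_of_not_equiv μ (hf_cont l) (hf_cont σ)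
        (hf_mul l) (hf_mul σ) (hf_unit σ) (hirr l) (hirr σ) (hdis σ l hlσ.symm), mul_zero]
    · exact rhoMuB_apply_eq_zero_of_not_diag μ d n f_ _ _ (by tauto)

/-- Block formula for the average state (Section 3): by Schur orthogonality,
`ρμ = ⊕_λ d_λ⁻¹ 1_λ ⊗ 1_λ ⊗ |I_{n_λ}⟩⟩⟨⟨I_{n_λ}|`. -/
theorem rhoMuB_entries
    {G : Type} [Group G] [TopologicalSpace G] [IsTopologicalGroup G]
    [CompactSpace G] [T2Space G] [MeasurableSpace G] [BorelSpace G]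
    (μ : Measure G) [μ.IsHaarMeasure] [IsProbabilityMeasure μ]
    {Λ : Type} [Fintype Λ] [Nonempty Λ] [DecidableEq Λ]
    (d n : Λ → ℕ) (hd : ∀ l, 0 < d l) (hn : ∀ l, 0 < n l)
    (f_ : ∀ l : Λ, G → Matrix (Fin (d l)) (Fin (d l)) ℂ)
    (hf_cont : ∀ l, Continuous (f_ l))
    (hf_mul : ∀ (l : Λ) (g h : G), f_ l (g * h) = f_ l g * f_ l h)
    (hf_one : ∀ l, f_ l 1 = 1)
    (hf_unit : ∀ (l : Λ) (g : G), f_ l g ∈ Matrix.unitaryGroup (Fin (d l)) ℂ)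
    (hirr : ∀ (l : Λ) (p : Submodule ℂ (Fin (d l) → ℂ)),
      (∀ g : G, ∀ x ∈ p, (f_ l g).mulVec x ∈ p) → p = ⊥ ∨ p = ⊤)
    (hdis : ∀ l l' : Λ, l ≠ l' → ¬ ∃ S : Matrix (Fin (d l')) (Fin (d l)) ℂ,
      Function.Bijective S.mulVec ∧ ∀ g : G, S * f_ l g = f_ l' g * S)
    :
    (∀ (l : Λ) (k k₂ m m₂ : Fin (d l)) (a a₂ b b₂ : Fin (n l)),
      rhoMuB μ d n f_ (⟨l, (k, a)⟩, ⟨l, (k₂, a₂)⟩) (⟨l, (m, b)⟩, ⟨l, (m₂, b₂)⟩) =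
        if k = m ∧ k₂ = m₂ ∧ a = a₂ ∧ b = b₂ then ((d l : ℂ))⁻¹ else 0) ∧
    (∀ p q : (Σ l : Λ, Fin (d l) × Fin (n l)) × (Σ l : Λ, Fin (d l) × Fin (n l)),
      ¬(p.1.1 = p.2.1 ∧ p.1.1 = q.1.1 ∧ p.1.1 = q.2.1) → rhoMuB μ d n f_ p q = 0) :=
  rhoMuB_entries_general μ d n f_ hf_cont hf_mul hf_unit hirr hdis

end GroupEstimation
end
end
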